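/- arXiv:1607.07844 — 2 statements merged into one kernel-verified Lean document; each statement's English description precedes it below -/
import Mathlib

section
/- Suppose c₀ := inf_{a_G < y < b_F} C(y) > 0. Let l ≤ u be measurable functions in L²(F) and define g^l = [∫_{Y<t}(l(Y) − u(t)) dF(t)]/C(Y) − ∫_T^Y [∫_{y<t}(u(y) − l(t)) dF(t)]/C²(y) dF*(y) and g^u = [∫_{Y<t}(u(Y) − l(t)) dF(t)]/C(Y) − ∫_T^Y [∫_{y<t}(l(y) − u(t)) dF(t)]/C²(y) dF*(y). Then for every measurable φ with l ≤ φ ≤ u one has g^l ≤ ζ(φ) ≤ g^u, and there is a constant K, depending only on c₀, such that E[(g^u − g^l)²] ≤ K ∫ (u − l)² dF, where the expectation is taken with respect to the law of the observed pair (Y, T). -/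
/-!
`ζ(φ)`, `g^l` and `g^u` all have the form `A(Y)/C(Y) − ∫_T^Y B(y)/C²(y) dF*(y)`, where `A` and `B`
are tail integrals `y ↦ ∫_{t>y} (f(y) − g(t)) dF(t)`, monotone in `f` and antitone in `g`; as
`C ≥ 0`, the bracket `l ≤ φ ≤ u` passes to `g^l ≤ ζ(φ) ≤ g^u`. For the size of the new bracket,
write `h = u − l ≥ 0`: the numerators of `g^u − g^l` are `∫_{t>y} (h(y) + h(t)) dF(t) ≤ h(y) + ∫ h dF`,
so once `C ≥ c₁ > 0` holds `F*`-a.e., `g^u − g^l ≤ h(Y)/c₁ + E ∫ h dF` for a constant `E`. Squaring,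
`E[h(Y)²] ≤ α⁻¹ ∫ h² dF` (as `F* ≤ α⁻¹ F`) and `(∫ h dF)² ≤ ∫ h² dF` give the `L²` bound.
-/

open MeasureTheory ProbabilityTheory Filter Set
open scoped ENNReal NNReal Topology BigOperators

noncomputable section

namespace RLTM

/-- The (cumulative) distribution function of a measure on `ℝ`. -/
def cdf (m : Measure ℝ) (x : ℝ) : ℝ := (m (Iic x)).toReal

/-- The left limit `F(x⁻)` of the distribution function of a measure on `ℝ`. -/
def cdfLeft (m : Measure ℝ) (x : ℝ) : ℝ := (m (Iio x)).toReal

/-- `α = P(T⁰ ≤ Y⁰)` where `Y⁰ ~ μ` and `T⁰ ~ ν` are independent. -/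
def alpha (μ ν : Measure ℝ) : ℝ≥0∞ := (μ.prod ν) {p : ℝ × ℝ | p.2 ≤ p.1}

/-- The law of an observed pair `(Y, T)`: the conditional law of `(Y⁰, T⁰)` given `T⁰ ≤ Y⁰`. -/
def obsLaw (μ ν : Measure ℝ) : Measure (ℝ × ℝ) :=
  (alpha μ ν)⁻¹ • ((μ.prod ν).restrict {p : ℝ × ℝ | p.2 ≤ p.1})

/-- The law `F*` of `Y`, the first coordinate of an observed pair. -/
def Fstar (μ ν : Measure ℝ) : Measure ℝ := (obsLaw μ ν).map Prod.fst

/-- The law `G*` of `T`, the second coordinate of an observed pair. -/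
def Gstar (μ ν : Measure ℝ) : Measure ℝ := (obsLaw μ ν).map Prod.snd

/-- `C(y) = G*(y) − F*(y⁻)`. -/
def Cfun (μ ν : Measure ℝ) (y : ℝ) : ℝ := cdf (Gstar μ ν) y - cdfLeft (Fstar μ ν) y

/-- The lower boundary `a_F = inf {x : F(x) > 0}` of the support, as an extended real. -/
def lowerBound (m : Measure ℝ) : EReal := sInf {x : EReal | ∃ r : ℝ, x = (r : EReal) ∧ 0 < cdf m r}

/-- The upper boundary `b_F = sup {x : F(x) < 1}` of the support, as an extended real. -/
def upperBound (m : Measure ℝ) : EReal := sSup {x : EReal | ∃ r : ℝ, x = (r : EReal) ∧ cdf m r < 1}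

variable {Ω : Type*}

/-- `C_n(y) = n⁻¹ Σ_{i<n} I(T_i ≤ y ≤ Y_i)`, where `Z i = (Y_i, T_i)`. -/
def Cn (Z : ℕ → Ω → ℝ × ℝ) (n : ℕ) (ω : Ω) (y : ℝ) : ℝ :=
  (n : ℝ)⁻¹ * ∑ i ∈ Finset.range n, if (Z i ω).2 ≤ y ∧ y ≤ (Z i ω).1 then (1 : ℝ) else 0

/-- The Lynden-Bell factor `(n C_n(Y_i) − 1)/(n C_n(Y_i))`. -/
def LBfactor (Z : ℕ → Ω → ℝ × ℝ) (n : ℕ) (ω : Ω) (i : ℕ) : ℝ :=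
  ((n : ℝ) * Cn Z n ω (Z i ω).1 - 1) / ((n : ℝ) * Cn Z n ω (Z i ω).1)

/-- The Lynden-Bell estimator `F_n(y) = 1 − ∏_{i : Y_i ≤ y} (n C_n(Y_i) − 1)/(n C_n(Y_i))`. -/
def Fn (Z : ℕ → Ω → ℝ × ℝ) (n : ℕ) (ω : Ω) (y : ℝ) : ℝ :=
  1 - ∏ i ∈ Finset.range n, if (Z i ω).1 ≤ y then LBfactor Z n ω i else 1

/-- The left limit `F_n(y⁻)` of the Lynden-Bell estimator. -/
def FnLeft (Z : ℕ → Ω → ℝ × ℝ) (n : ℕ) (ω : Ω) (y : ℝ) : ℝ :=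
  1 - ∏ i ∈ Finset.range n, if (Z i ω).1 < y then LBfactor Z n ω i else 1

/-- The jump of the Lynden-Bell estimator at the data point `Y_j`. -/
def jump (Z : ℕ → Ω → ℝ × ℝ) (n : ℕ) (ω : Ω) (j : ℕ) : ℝ :=
  Fn Z n ω (Z j ω).1 - FnLeft Z n ω (Z j ω).1

/-- The Lynden-Bell integral `∫ φ dF_n`, the sum of `φ(Y_j)` against the jumps of `F_n`. -/
def lynInt (Z : ℕ → Ω → ℝ × ℝ) (n : ℕ) (ω : Ω) (φ : ℝ → ℝ) : ℝ :=
  ∑ j ∈ Finset.range n, jump Z n ω j * φ ((Z j ω).1)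

/-- `ψ(w) = ∫_{w<t} (φ(w) − φ(t)) dF(t)`. -/
def psi (μ : Measure ℝ) (φ : ℝ → ℝ) (w : ℝ) : ℝ := ∫ t in Ioi w, (φ w - φ t) ∂μ

/-- `ζ(φ) = ψ(Y)/C(Y) − ∫_T^Y ψ(y)/C²(y) dF*(y)`, as a function of the observed pair. -/
def zeta (μ ν : Measure ℝ) (φ : ℝ → ℝ) (p : ℝ × ℝ) : ℝ :=
  psi μ φ p.1 / Cfun μ ν p.1 -
    ∫ y in Ioc p.2 p.1, psi μ φ y / (Cfun μ ν y) ^ 2 ∂(Fstar μ ν)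

/-- `Cov(ζ(φ₁), ζ(φ₂))` under the law of an observed pair. -/
def covZeta (μ ν : Measure ℝ) (φ₁ φ₂ : ℝ → ℝ) : ℝ :=
  ∫ p, zeta μ ν φ₁ p * zeta μ ν φ₂ p ∂(obsLaw μ ν) -
    (∫ p, zeta μ ν φ₁ p ∂(obsLaw μ ν)) * (∫ p, zeta μ ν φ₂ p ∂(obsLaw μ ν))

/-- A measure `ν` on `Fin k → ℝ` is a centered Gaussian with covariance matrix `S`
(Cramér–Wold characterization). -/
def IsCenteredGaussianVec {k : ℕ} (m : Measure (Fin k → ℝ)) (S : Fin k → Fin k → ℝ) : Prop :=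
  ∀ l : Fin k → ℝ, m.map (fun x => ∑ i, l i * x i) =
    gaussianReal 0 (Real.toNNReal (∑ i, ∑ j, l i * l j * S i j))

/-- The `L²(m)` bracketing number `N_[](ε, 𝓕, L²(m))` of a class of functions, in `ℕ∞`. -/
def bracketNum2 {α : Type*} [MeasurableSpace α] (m : Measure α) (𝓕 : Set (α → ℝ)) (ε : ℝ) : ℕ∞ :=
  sInf {n : ℕ∞ | ∃ B : Finset ((α → ℝ) × (α → ℝ)), (B.card : ℕ∞) = n ∧
    (∀ b ∈ B, ∫⁻ x, ENNReal.ofReal ((b.2 x - b.1 x) ^ 2) ∂m < ENNReal.ofReal (ε ^ 2)) ∧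
    ∀ φ ∈ 𝓕, ∃ b ∈ B, ∀ x, b.1 x ≤ φ x ∧ φ x ≤ b.2 x}

/-- The `L¹(m)` bracketing number `N_[](ε, 𝓕, L¹(m))` of a class of functions, in `ℕ∞`. -/
def bracketNum1 {α : Type*} [MeasurableSpace α] (m : Measure α) (𝓕 : Set (α → ℝ)) (ε : ℝ) : ℕ∞ :=
  sInf {n : ℕ∞ | ∃ B : Finset ((α → ℝ) × (α → ℝ)), (B.card : ℕ∞) = n ∧
    (∀ b ∈ B, ∫⁻ x, ENNReal.ofReal (b.2 x - b.1 x) ∂m < ENNReal.ofReal ε) ∧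
    ∀ φ ∈ 𝓕, ∃ b ∈ B, ∀ x, b.1 x ≤ φ x ∧ φ x ≤ b.2 x}

/-- Finiteness of the bracketing entropy integral `J(δ) = ∫₀^δ √(log N_[](ε, 𝓕, L²(m))) dε`. -/
def JFinite {α : Type*} [MeasurableSpace α] (m : Measure α) (𝓕 : Set (α → ℝ)) (δ : ℝ) : Prop :=
  (∀ ε : ℝ, 0 < ε → bracketNum2 m 𝓕 ε ≠ ⊤) ∧
    IntegrableOn (fun ε => Real.sqrt (Real.log ((bracketNum2 m 𝓕 ε).toNat : ℝ))) (Ioc 0 δ)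

/-- The squared `L²(m)` distance `d(φ₁, φ₂)² = ∫ (φ₁ − φ₂)² dm`, valued in `ℝ≥0∞`. -/
def dL2sq {α : Type*} [MeasurableSpace α] (m : Measure α) (φ₁ φ₂ : α → ℝ) : ℝ≥0∞ :=
  ∫⁻ x, ENNReal.ofReal ((φ₁ x - φ₂ x) ^ 2) ∂m


/-- The lower bracket `g^l` for the transformed class, built from a bracket `[l, u]`. -/
def bracketLow (μ ν : Measure ℝ) (l u : ℝ → ℝ) (p : ℝ × ℝ) : ℝ :=
  (∫ t in Ioi p.1, (l p.1 - u t) ∂μ) / Cfun μ ν p.1 -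
    ∫ y in Ioc p.2 p.1, (∫ t in Ioi y, (u y - l t) ∂μ) / (Cfun μ ν y) ^ 2 ∂(Fstar μ ν)

/-- The upper bracket `g^u` for the transformed class, built from a bracket `[l, u]`. -/
def bracketHigh (μ ν : Measure ℝ) (l u : ℝ → ℝ) (p : ℝ × ℝ) : ℝ :=
  (∫ t in Ioi p.1, (u p.1 - l t) ∂μ) / Cfun μ ν p.1 -
    ∫ y in Ioc p.2 p.1, (∫ t in Ioi y, (l y - u t) ∂μ) / (Cfun μ ν y) ^ 2 ∂(Fstar μ ν)

section ObservedLaw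

variable (μ ν : Measure ℝ)

lemma obsLaw_le_smul_prod : obsLaw μ ν ≤ (alpha μ ν)⁻¹ • μ.prod ν := by
  unfold obsLaw
  gcongr
  exact Measure.restrict_le_self

lemma ae_snd_le_fst_obsLaw : ∀ᵐ p ∂obsLaw μ ν, p.2 ≤ p.1 :=
  Measure.ae_smul_measure (ae_restrict_mem (measurableSet_le measurable_snd measurable_fst)) _

lemma Fstar_Iic_le_Gstar_Iic (y : ℝ) : Fstar μ ν (Iic y) ≤ Gstar μ ν (Iic y) := by
  rw [Fstar, Gstar, Measure.map_apply measurable_fst measurableSet_Iic,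
    Measure.map_apply measurable_snd measurableSet_Iic]
  exact measure_mono_ae ((ae_snd_le_fst_obsLaw μ ν).mono fun _ hp hp1 => hp.trans hp1)

variable [IsProbabilityMeasure ν]

lemma Fstar_le_smul : Fstar μ ν ≤ (alpha μ ν)⁻¹ • μ :=
  calc Fstar μ ν ≤ ((alpha μ ν)⁻¹ • μ.prod ν).map Prod.fst :=
        Measure.map_mono (obsLaw_le_smul_prod μ ν) measurable_fst
    _ = (alpha μ ν)⁻¹ • μ := by
        rw [Measure.map_smul, Measure.map_fst_prod, measure_univ, one_smul]

lemma Fstar_absolutelyContinuous : Fstar μ ν ≪ μ :=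
  Measure.absolutelyContinuous_of_le_smul (Fstar_le_smul μ ν)

lemma integrable_Fstar (hα : alpha μ ν ≠ 0) {f : ℝ → ℝ} (hf : Integrable f μ) :
    Integrable f (Fstar μ ν) :=
  (hf.smul_measure (ENNReal.inv_ne_top.2 hα)).mono_measure (Fstar_le_smul μ ν)

lemma integral_Fstar_le (hα : alpha μ ν ≠ 0) {f : ℝ → ℝ} (hf : Integrable f μ) (hf₀ : 0 ≤ f) :
    ∫ y, f y ∂Fstar μ ν ≤ (alpha μ ν)⁻¹.toReal * ∫ y, f y ∂μ :=
  calc ∫ y, f y ∂Fstar μ ν ≤ ∫ y, f y ∂((alpha μ ν)⁻¹ • μ) :=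
        integral_mono_measure (Fstar_le_smul μ ν) (ae_of_all _ hf₀)
          (hf.smul_measure (ENNReal.inv_ne_top.2 hα))
    _ = (alpha μ ν)⁻¹.toReal * ∫ y, f y ∂μ := by rw [integral_smul_measure, smul_eq_mul]

lemma lintegral_Fstar_le (f : ℝ → ℝ≥0∞) :
    ∫⁻ y, f y ∂Fstar μ ν ≤ (alpha μ ν)⁻¹ * ∫⁻ y, f y ∂μ :=
  (lintegral_mono' (Fstar_le_smul μ ν) le_rfl).trans_eq (lintegral_smul_measure _ _)

variable [IsProbabilityMeasure μ]

lemma alpha_ne_top : alpha μ ν ≠ ⊤ := measure_ne_top _ _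

lemma isProbabilityMeasure_obsLaw (hα : alpha μ ν ≠ 0) : IsProbabilityMeasure (obsLaw μ ν) :=
  ⟨by
    rw [obsLaw, Measure.smul_apply, Measure.restrict_apply_univ, smul_eq_mul]
    exact ENNReal.inv_mul_cancel hα (alpha_ne_top μ ν)⟩

lemma isProbabilityMeasure_Fstar (hα : alpha μ ν ≠ 0) : IsProbabilityMeasure (Fstar μ ν) :=
  haveI := isProbabilityMeasure_obsLaw μ ν hα
  Measure.isProbabilityMeasure_map measurable_fst.aemeasurable

lemma isProbabilityMeasure_Gstar (hα : alpha μ ν ≠ 0) : IsProbabilityMeasure (Gstar μ ν) :=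
  haveI := isProbabilityMeasure_obsLaw μ ν hα
  Measure.isProbabilityMeasure_map measurable_snd.aemeasurable

end ObservedLaw

lemma ae_lowerBound_le (ν : Measure ℝ) [IsFiniteMeasure ν] : ∀ᵐ t : ℝ ∂ν, lowerBound ν ≤ t := by
  have hnull : ∀ q ∈ {q : ℚ | ((q : ℝ) : EReal) < lowerBound ν}, ν (Iic (q : ℝ)) = 0 := by
    intro q hq
    by_contra h
    have : lowerBound ν ≤ (q : ℝ) := sInf_le ⟨q, rfl, ENNReal.toReal_pos h (measure_ne_top _ _)⟩
    exact this.not_gt hq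
  rw [ae_iff]
  refine measure_mono_null (fun t ht => ?_) ((measure_biUnion_null_iff (to_countable _)).2 hnull)
  obtain ⟨q, htq, hq⟩ := EReal.exists_rat_btwn_of_lt (not_le.1 ht)
  exact mem_biUnion hq (mem_Iic.2 (EReal.coe_lt_coe_iff.1 htq).le)

lemma ae_le_upperBound (μ : Measure ℝ) [IsProbabilityMeasure μ] :
    ∀ᵐ y : ℝ ∂μ, y ≤ upperBound μ := by
  have hnull : ∀ q ∈ {q : ℚ | upperBound μ < ((q : ℝ) : EReal)}, μ (Ioi (q : ℝ)) = 0 := by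
    intro q hq
    have hcdf : ¬ cdf μ q < 1 := fun h =>
      (show ((q : ℝ) : EReal) ≤ upperBound μ from le_sSup ⟨q, rfl, h⟩).not_gt hq
    rw [← compl_Iic, prob_compl_eq_zero_iff measurableSet_Iic, ← ENNReal.toReal_eq_one_iff]
    exact le_antisymm measureReal_le_one (not_lt.1 hcdf)
  rw [ae_iff]
  refine measure_mono_null (fun y hy => ?_) ((measure_biUnion_null_iff (to_countable _)).2 hnull)
  obtain ⟨q, hq, hqy⟩ := EReal.exists_rat_btwn_of_lt (not_le.1 hy)
  exact mem_biUnion hq (mem_Ioi.2 (EReal.coe_lt_coe_iff.1 hqy))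

lemma ae_measure_singleton_ne_zero {α : Type*} [MeasurableSpace α] (m : Measure α) {s : Set α}
    (hs : s.Countable) : ∀ᵐ x ∂m, x ∈ s → m {x} ≠ 0 := by
  rw [ae_iff]
  simp only [Classical.not_imp, not_not]
  refine measure_mono_null (fun x hx => mem_biUnion hx (mem_singleton x))
    ((measure_biUnion_null_iff (hs.mono fun _ hx => hx.1)).2 fun _ hx => hx.2)

lemma exists_pos_ae_le_of_finite {α : Type*} [MeasurableSpace α] {m : Measure α} {f : α → ℝ}
    {s : Set α} {c₀ : ℝ} (hs : s.Finite) (hc₀ : 0 < c₀)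
    (h : ∀ᵐ x ∂m, (x ∈ s → 0 < f x) ∧ (x ∉ s → c₀ ≤ f x)) :
    ∃ c, 0 < c ∧ ∀ᵐ x ∂m, c ≤ f x := by
  have hsmall : ∀ᶠ c in 𝓝 (0 : ℝ), c ≤ c₀ ∧ ∀ x ∈ {x ∈ s | 0 < f x}, c ≤ f x :=
    (eventually_le_nhds hc₀).and
      ((eventually_all_finite (hs.subset (sep_subset _ _))).2 fun x hx => eventually_le_nhds hx.2)
  obtain ⟨c, ⟨hcc₀, hcs⟩, hc⟩ :=
    ((hsmall.filter_mono nhdsWithin_le_nhds).and (self_mem_nhdsWithin (s := Ioi 0))).exists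
  refine ⟨c, hc, h.mono fun x hx => ?_⟩
  by_cases hxs : x ∈ s
  · exact hcs x ⟨hxs, hx.1 hxs⟩
  · exact hcc₀.trans (hx.2 hxs)

section Cfun

variable (μ ν : Measure ℝ) [IsProbabilityMeasure μ] [IsProbabilityMeasure ν]

lemma measureReal_Fstar_singleton_le_Cfun (hα : alpha μ ν ≠ 0) (y : ℝ) :
    (Fstar μ ν).real {y} ≤ Cfun μ ν y := by
  have := isProbabilityMeasure_Fstar μ ν hα
  have := isProbabilityMeasure_Gstar μ ν hα
  have hIic : (Fstar μ ν).real (Iio y) + (Fstar μ ν).real {y} = (Fstar μ ν).real (Iic y) := by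
    rw [← measureReal_union (by simp) (measurableSet_singleton y), Iio_union_right]
  have hle : (Fstar μ ν).real (Iic y) ≤ (Gstar μ ν).real (Iic y) :=
    ENNReal.toReal_mono (measure_ne_top _ _) (Fstar_Iic_le_Gstar_Iic μ ν y)
  change _ ≤ (Gstar μ ν).real (Iic y) - (Fstar μ ν).real (Iio y)
  linarith

lemma Cfun_nonneg (hα : alpha μ ν ≠ 0) (y : ℝ) : 0 ≤ Cfun μ ν y :=
  measureReal_nonneg.trans (measureReal_Fstar_singleton_le_Cfun μ ν hα y)

lemma measurable_Cfun (hα : alpha μ ν ≠ 0) : Measurable (Cfun μ ν) := by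
  have := isProbabilityMeasure_Fstar μ ν hα
  have := isProbabilityMeasure_Gstar μ ν hα
  have hG : Monotone (cdf (Gstar μ ν)) := fun _ _ hab => measureReal_mono (Iic_subset_Iic.2 hab)
  have hF : Monotone (cdfLeft (Fstar μ ν)) := fun _ _ hab => measureReal_mono (Iio_subset_Iio hab)
  exact hG.measurable.sub hF.measurable

lemma ae_Fstar_mem_support :
    ∀ᵐ y : ℝ ∂Fstar μ ν, lowerBound ν ≤ y ∧ (y : EReal) ≤ upperBound μ := by
  have hmeas : MeasurableSet {y : ℝ | lowerBound ν ≤ y ∧ (y : EReal) ≤ upperBound μ} :=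
    (measurableSet_le measurable_const measurable_coe_real_ereal).inter
      (measurableSet_le measurable_coe_real_ereal measurable_const)
  refine (ae_map_iff measurable_fst.aemeasurable hmeas).2 ?_
  have hac : obsLaw μ ν ≪ μ.prod ν :=
    Measure.absolutelyContinuous_of_le_smul (obsLaw_le_smul_prod μ ν)
  filter_upwards [ae_snd_le_fst_obsLaw μ ν,
    hac.ae_le (Measure.quasiMeasurePreserving_snd.ae (ae_lowerBound_le ν)),
    hac.ae_le (Measure.quasiMeasurePreserving_fst.ae (ae_le_upperBound μ))] with p hp hlo hhi
  exact ⟨hlo.trans (EReal.coe_le_coe_iff.2 hp), hhi⟩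

/-- Inside `(a_G, b_F)` the bound is `c₀`; `F*` lives on `[a_G, b_F]`, and an endpoint charged by
`F*` is an atom `y` with `C(y) ≥ F*{y} > 0`. -/
theorem exists_pos_ae_le_Cfun (hα : alpha μ ν ≠ 0) {c₀ : ℝ} (hc₀ : 0 < c₀)
    (hC : ∀ y : ℝ, lowerBound ν < (y : EReal) → (y : EReal) < upperBound μ → c₀ ≤ Cfun μ ν y) :
    ∃ c₁, 0 < c₁ ∧ ∀ᵐ y ∂Fstar μ ν, c₁ ≤ Cfun μ ν y := by
  set ends := {y : ℝ | (y : EReal) = lowerBound ν} ∪ {y : ℝ | (y : EReal) = upperBound μ}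
  have hends : ends.Finite :=
    (Subsingleton.finite fun _ hx _ hy => EReal.coe_injective (hx.trans hy.symm)).union
      (Subsingleton.finite fun _ hx _ hy => EReal.coe_injective (hx.trans hy.symm))
  have := isProbabilityMeasure_Fstar μ ν hα
  refine exists_pos_ae_le_of_finite hends hc₀ ?_
  filter_upwards [ae_Fstar_mem_support μ ν,
    ae_measure_singleton_ne_zero (Fstar μ ν) hends.countable] with y ⟨hlo, hhi⟩ hatom
  refine ⟨fun hy => ?_, fun hy => ?_⟩
  · exact (ENNReal.toReal_pos (hatom hy) (measure_ne_top _ _)).trans_le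
      (measureReal_Fstar_singleton_le_Cfun μ ν hα y)
  · simp only [ends, mem_union, not_or] at hy
    exact hC y (hlo.lt_of_ne (Ne.symm hy.1)) (hhi.lt_of_ne hy.2)

end Cfun

section TailGap

variable (μ : Measure ℝ)

def tailGap (f g : ℝ → ℝ) (y : ℝ) : ℝ := ∫ t in Ioi y, (f y - g t) ∂μ

lemma measurable_setIntegral_Ioi {g : ℝ → ℝ} (hg : Integrable g μ) :
    Measurable fun y => ∫ t in Ioi y, g t ∂μ := by
  have hanti : ∀ {g' : ℝ → ℝ}, Integrable g' μ → 0 ≤ g' →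
      Antitone fun y => ∫ t in Ioi y, g' t ∂μ := fun hg' hg'₀ _ _ hab =>
    setIntegral_mono_set hg'.integrableOn (ae_of_all _ hg'₀) (Ioi_subset_Ioi hab).eventuallyLE
  have hsplit : (fun y => ∫ t in Ioi y, g t ∂μ) =
      fun y => (∫ t in Ioi y, max (g t) 0 ∂μ) - ∫ t in Ioi y, max (-g t) 0 ∂μ := by
    funext y
    rw [← integral_sub hg.pos_part.integrableOn hg.fun_neg.pos_part.integrableOn]
    simp_rw [max_zero_sub_max_neg_zero_eq_self]
  rw [hsplit]
  exact (hanti hg.pos_part fun _ => le_max_right _ _).measurable.sub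
    (hanti hg.fun_neg.pos_part fun _ => le_max_right _ _).measurable

variable [IsFiniteMeasure μ]

lemma tailGap_eq {f g : ℝ → ℝ} (hg : Integrable g μ) (y : ℝ) :
    tailGap μ f g y = f y * μ.real (Ioi y) - ∫ t in Ioi y, g t ∂μ := by
  rw [tailGap, integral_sub (integrable_const _).integrableOn hg.integrableOn, setIntegral_const,
    smul_eq_mul, mul_comm]

lemma tailGap_mono {f₁ f₂ g₁ g₂ : ℝ → ℝ} (hg₁ : Integrable g₁ μ) (hg₂ : Integrable g₂ μ) {y : ℝ}
    (hf : f₁ y ≤ f₂ y) (hg : g₂ ≤ g₁) : tailGap μ f₁ g₁ y ≤ tailGap μ f₂ g₂ y :=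
  setIntegral_mono ((integrable_const _).sub' hg₁).integrableOn
    ((integrable_const _).sub' hg₂).integrableOn fun t => sub_le_sub hf (hg t)

variable [IsProbabilityMeasure μ]

lemma abs_tailGap_le {f g : ℝ → ℝ} (hg : Integrable g μ) (y : ℝ) :
    |tailGap μ f g y| ≤ |f y| + ∫ t, |g t| ∂μ := by
  rw [tailGap_eq μ hg]
  refine (abs_sub _ _).trans (add_le_add ?_ ?_)
  · rw [abs_mul, abs_of_nonneg measureReal_nonneg]
    exact mul_le_of_le_one_right (abs_nonneg _) measureReal_le_one
  · exact abs_integral_le_integral_abs.trans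
      (setIntegral_le_integral hg.abs (ae_of_all _ fun _ => abs_nonneg _))

lemma tailGap_sub_tailGap_mem_Icc {l u : ℝ → ℝ} (hl : Integrable l μ) (hu : Integrable u μ)
    (hlu : ∀ x, l x ≤ u x) (y : ℝ) :
    tailGap μ u l y - tailGap μ l u y ∈ Icc 0 (u y - l y + ∫ t, (u t - l t) ∂μ) := by
  have hh : Integrable (fun t => u t - l t) μ := hu.sub' hl
  have hpos : ∀ t, 0 ≤ u y - l y + (u t - l t) := fun t =>
    add_nonneg (sub_nonneg.2 (hlu y)) (sub_nonneg.2 (hlu t))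
  have hD : tailGap μ u l y - tailGap μ l u y = ∫ t in Ioi y, (u y - l y + (u t - l t)) ∂μ := by
    rw [tailGap, tailGap, ← integral_sub ((integrable_const _).sub' hl).integrableOn
      ((integrable_const _).sub' hu).integrableOn]
    congr 1 with t
    ring
  rw [hD]
  refine ⟨setIntegral_nonneg measurableSet_Ioi fun t _ => hpos t, ?_⟩
  calc ∫ t in Ioi y, (u y - l y + (u t - l t)) ∂μ
      ≤ ∫ t, (u y - l y + (u t - l t)) ∂μ :=
        setIntegral_le_integral ((integrable_const _).add hh) (ae_of_all _ hpos)
    _ = u y - l y + ∫ t, (u t - l t) ∂μ := by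
        rw [integral_add (integrable_const _) hh, integral_const, probReal_univ, one_smul]

end TailGap

lemma ofReal_sq_integral_le_lintegral_sq {α : Type*} [MeasurableSpace α] {m : Measure α}
    [IsProbabilityMeasure m] {h : α → ℝ} (hh : MemLp h 2 m) :
    ENNReal.ofReal ((∫ x, h x ∂m) ^ 2) ≤ ∫⁻ x, ENNReal.ofReal (h x ^ 2) ∂m := by
  rw [← ofReal_integral_eq_lintegral_ofReal hh.integrable_sq (ae_of_all _ fun _ => sq_nonneg _)]
  have hvar := variance_eq_sub hh
  simp only [Pi.pow_apply] at hvar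
  exact ENNReal.ofReal_le_ofReal (by linarith [variance_nonneg h m])

section Brackets

variable (μ ν : Measure ℝ)

def zetaTransform (A B : ℝ → ℝ) (p : ℝ × ℝ) : ℝ :=
  A p.1 / Cfun μ ν p.1 - ∫ y in Ioc p.2 p.1, B y / Cfun μ ν y ^ 2 ∂Fstar μ ν

lemma zeta_eq_zetaTransform (φ : ℝ → ℝ) :
    zeta μ ν φ = zetaTransform μ ν (tailGap μ φ φ) (tailGap μ φ φ) := rfl

lemma bracketLow_eq_zetaTransform (l u : ℝ → ℝ) :
    bracketLow μ ν l u = zetaTransform μ ν (tailGap μ l u) (tailGap μ u l) := rfl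

lemma bracketHigh_eq_zetaTransform (l u : ℝ → ℝ) :
    bracketHigh μ ν l u = zetaTransform μ ν (tailGap μ u l) (tailGap μ l u) := rfl

variable {μ ν} in
lemma zetaTransform_mono {A₁ A₂ B₁ B₂ : ℝ → ℝ} {p : ℝ × ℝ} (hCp : 0 ≤ Cfun μ ν p.1)
    (hB₁ : IntegrableOn (fun y => B₁ y / Cfun μ ν y ^ 2) (Ioc p.2 p.1) (Fstar μ ν))
    (hB₂ : IntegrableOn (fun y => B₂ y / Cfun μ ν y ^ 2) (Ioc p.2 p.1) (Fstar μ ν))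
    (hA : A₁ p.1 ≤ A₂ p.1) (hB : B₂ ≤ B₁) :
    zetaTransform μ ν A₁ B₁ p ≤ zetaTransform μ ν A₂ B₂ p :=
  sub_le_sub (div_le_div_of_nonneg_right hA hCp)
    (setIntegral_mono hB₂ hB₁ fun y => div_le_div_of_nonneg_right (hB y) (sq_nonneg _))

variable {μ ν} in
lemma zetaTransform_sub_zetaTransform {A₁ A₂ B₁ B₂ : ℝ → ℝ} {p : ℝ × ℝ}
    (hB₁ : IntegrableOn (fun y => B₁ y / Cfun μ ν y ^ 2) (Ioc p.2 p.1) (Fstar μ ν))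
    (hB₂ : IntegrableOn (fun y => B₂ y / Cfun μ ν y ^ 2) (Ioc p.2 p.1) (Fstar μ ν)) :
    zetaTransform μ ν A₁ B₁ p - zetaTransform μ ν A₂ B₂ p =
      (A₁ p.1 - A₂ p.1) / Cfun μ ν p.1 +
        ∫ y in Ioc p.2 p.1, (B₂ y - B₁ y) / Cfun μ ν y ^ 2 ∂Fstar μ ν := by
  simp_rw [zetaTransform, sub_div]
  rw [integral_sub hB₂ hB₁]
  ring

variable [IsProbabilityMeasure μ] [IsProbabilityMeasure ν] (hα : alpha μ ν ≠ 0) {c₁ : ℝ}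
  (hc₁ : 0 < c₁) (hae : ∀ᵐ y ∂Fstar μ ν, c₁ ≤ Cfun μ ν y)
include hα hc₁ hae

lemma integrable_tailGap_div_sq {f g : ℝ → ℝ} (hf : Integrable f μ) (hg : Integrable g μ) :
    Integrable (fun y => tailGap μ f g y / Cfun μ ν y ^ 2) (Fstar μ ν) := by
  have := isProbabilityMeasure_Fstar μ ν hα
  have hmeas : AEStronglyMeasurable (fun y => tailGap μ f g y / Cfun μ ν y ^ 2) (Fstar μ ν) := by
    simp_rw [tailGap_eq μ hg]
    have hIoi : Antitone fun y => μ.real (Ioi y) := fun _ _ hab =>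
      measureReal_mono (Ioi_subset_Ioi hab)
    exact ((((hf.1.aemeasurable.mono_ac (Fstar_absolutelyContinuous μ ν)).mul
      hIoi.measurable.aemeasurable).sub (measurable_setIntegral_Ioi μ hg).aemeasurable).div
      ((measurable_Cfun μ ν hα).pow_const 2).aemeasurable).aestronglyMeasurable
  refine Integrable.mono'
    (((integrable_Fstar μ ν hα hf).abs.add (integrable_const (∫ t, |g t| ∂μ))).div_const (c₁ ^ 2))
    hmeas ?_
  filter_upwards [hae] with y hy
  rw [Real.norm_eq_abs, abs_div, abs_of_nonneg (sq_nonneg (Cfun μ ν y))]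
  exact div_le_div₀ (add_nonneg (abs_nonneg _) (integral_nonneg fun _ => abs_nonneg _))
    (abs_tailGap_le μ hg y) (by positivity) (pow_le_pow_left₀ hc₁.le hy 2)

theorem bracketLow_le_zeta_le_bracketHigh {l u φ : ℝ → ℝ} (hφ : Measurable φ)
    (hl : Integrable l μ) (hu : Integrable u μ) (hlφu : ∀ x, l x ≤ φ x ∧ φ x ≤ u x)
    (p : ℝ × ℝ) :
    bracketLow μ ν l u p ≤ zeta μ ν φ p ∧ zeta μ ν φ p ≤ bracketHigh μ ν l u p := by
  have hφi : Integrable φ μ := integrable_of_le_of_le hφ.aestronglyMeasurable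
    (ae_of_all _ fun x => (hlφu x).1) (ae_of_all _ fun x => (hlφu x).2) hl hu
  have hint : ∀ {f g : ℝ → ℝ}, Integrable f μ → Integrable g μ →
      IntegrableOn (fun y => tailGap μ f g y / Cfun μ ν y ^ 2) (Ioc p.2 p.1) (Fstar μ ν) :=
    fun hf hg => (integrable_tailGap_div_sq μ ν hα hc₁ hae hf hg).integrableOn
  have hCp := Cfun_nonneg μ ν hα p.1
  rw [bracketLow_eq_zetaTransform, zeta_eq_zetaTransform, bracketHigh_eq_zetaTransform]
  exact ⟨zetaTransform_mono hCp (hint hu hl) (hint hφi hφi)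
      (tailGap_mono μ hu hφi (hlφu p.1).1 fun t => (hlφu t).2)
      fun y => tailGap_mono μ hφi hl (hlφu y).2 fun t => (hlφu t).1,
    zetaTransform_mono hCp (hint hφi hφi) (hint hl hu)
      (tailGap_mono μ hφi hl (hlφu p.1).2 fun t => (hlφu t).1)
      fun y => tailGap_mono μ hu hφi (hlφu y).1 fun t => (hlφu t).2⟩


lemma bracketHigh_sub_bracketLow_le {l u : ℝ → ℝ} (hl : Integrable l μ) (hu : Integrable u μ)
    (hlu : ∀ x, l x ≤ u x) :
    ∀ᵐ p ∂obsLaw μ ν, 0 ≤ bracketHigh μ ν l u p - bracketLow μ ν l u p ∧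
      bracketHigh μ ν l u p - bracketLow μ ν l u p ≤ (u p.1 - l p.1) / c₁ +
        (c₁⁻¹ + ((alpha μ ν)⁻¹.toReal + 1) / c₁ ^ 2) * ∫ x, (u x - l x) ∂μ := by
  have := isProbabilityMeasure_Fstar μ ν hα
  have hD := tailGap_sub_tailGap_mem_Icc μ hl hu hlu
  set B := ∫ x, (u x - l x) ∂μ
  set D := fun y => tailGap μ u l y - tailGap μ l u y
  have hhF : Integrable (fun y => u y - l y + B) (Fstar μ ν) :=
    (integrable_Fstar μ ν hα (hu.sub' hl)).add (integrable_const B)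
  filter_upwards [ae_of_ae_map measurable_fst.aemeasurable hae] with p hp
  have hint : ∀ {f g : ℝ → ℝ}, Integrable f μ → Integrable g μ →
      IntegrableOn (fun y => tailGap μ f g y / Cfun μ ν y ^ 2) (Ioc p.2 p.1) (Fstar μ ν) :=
    fun hf hg => (integrable_tailGap_div_sq μ ν hα hc₁ hae hf hg).integrableOn
  have hDint : IntegrableOn (fun y => D y / Cfun μ ν y ^ 2) (Ioc p.2 p.1) (Fstar μ ν) :=
    ((hint hu hl).sub (hint hl hu)).congr_fun (fun y _ => (sub_div _ _ _).symm) measurableSet_Ioc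
  have hfirst : D p.1 / Cfun μ ν p.1 ≤ (u p.1 - l p.1 + B) / c₁ :=
    div_le_div₀ ((hD p.1).1.trans (hD p.1).2) (hD p.1).2 hc₁ hp
  have hsecond : ∫ y in Ioc p.2 p.1, D y / Cfun μ ν y ^ 2 ∂Fstar μ ν ≤
      ((alpha μ ν)⁻¹.toReal * B + B) / c₁ ^ 2 :=
    calc ∫ y in Ioc p.2 p.1, D y / Cfun μ ν y ^ 2 ∂Fstar μ ν
        ≤ ∫ y in Ioc p.2 p.1, (u y - l y + B) / c₁ ^ 2 ∂Fstar μ ν := by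
          refine setIntegral_mono_ae hDint (hhF.div_const _).integrableOn ?_
          filter_upwards [hae] with y hy
          exact div_le_div₀ ((hD y).1.trans (hD y).2) (hD y).2 (by positivity)
            (pow_le_pow_left₀ hc₁.le hy 2)
      _ ≤ ∫ y, (u y - l y + B) / c₁ ^ 2 ∂Fstar μ ν :=
          setIntegral_le_integral (hhF.div_const _)
            (ae_of_all _ fun y => div_nonneg ((hD y).1.trans (hD y).2) (sq_nonneg c₁))
      _ = (∫ y, (u y - l y) ∂Fstar μ ν + B) / c₁ ^ 2 := by
          rw [integral_div, integral_add (integrable_Fstar μ ν hα (hu.sub' hl)) (integrable_const B),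
            integral_const, probReal_univ, one_smul]
      _ ≤ ((alpha μ ν)⁻¹.toReal * B + B) / c₁ ^ 2 := by
          gcongr
          exact integral_Fstar_le μ ν hα (hu.sub' hl) fun x => sub_nonneg.2 (hlu x)
  rw [bracketHigh_eq_zetaTransform, bracketLow_eq_zetaTransform,
    zetaTransform_sub_zetaTransform (hint hl hu) (hint hu hl)]
  refine ⟨add_nonneg (div_nonneg (hD p.1).1 (Cfun_nonneg μ ν hα p.1))
    (setIntegral_nonneg measurableSet_Ioc fun y _ => div_nonneg (hD y).1 (sq_nonneg _)), ?_⟩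
  calc D p.1 / Cfun μ ν p.1 + ∫ y in Ioc p.2 p.1, D y / Cfun μ ν y ^ 2 ∂Fstar μ ν
      ≤ (u p.1 - l p.1 + B) / c₁ + ((alpha μ ν)⁻¹.toReal * B + B) / c₁ ^ 2 :=
        add_le_add hfirst hsecond
    _ = _ := by field_simp; ring


theorem lintegral_sq_bracketHigh_sub_bracketLow_le :
    ∃ K : ℝ, 0 < K ∧ ∀ l u : ℝ → ℝ, MemLp l 2 μ → MemLp u 2 μ → (∀ x, l x ≤ u x) →
      ∫⁻ p, ENNReal.ofReal ((bracketHigh μ ν l u p - bracketLow μ ν l u p) ^ 2) ∂obsLaw μ ν ≤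
        ENNReal.ofReal K * ∫⁻ x, ENNReal.ofReal ((u x - l x) ^ 2) ∂μ := by
  have := isProbabilityMeasure_obsLaw μ ν hα
  set a := (alpha μ ν)⁻¹.toReal
  set E := c₁⁻¹ + (a + 1) / c₁ ^ 2
  refine ⟨2 / c₁ ^ 2 * a + 2 * E ^ 2, by positivity, fun l u hl hu hlu => ?_⟩
  set I := ∫⁻ x, ENNReal.ofReal ((u x - l x) ^ 2) ∂μ
  set B := ∫ x, (u x - l x) ∂μ
  have hsq : ∀ᵐ p ∂obsLaw μ ν,
      ENNReal.ofReal ((bracketHigh μ ν l u p - bracketLow μ ν l u p) ^ 2) ≤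
        ENNReal.ofReal (2 / c₁ ^ 2 * (u p.1 - l p.1) ^ 2) + ENNReal.ofReal (2 * E ^ 2 * B ^ 2) := by
    filter_upwards [bracketHigh_sub_bracketLow_le μ ν hα hc₁ hae (hl.integrable one_le_two)
      (hu.integrable one_le_two) hlu] with p ⟨h₀, hle⟩
    rw [← ENNReal.ofReal_add (by positivity) (by positivity)]
    refine ENNReal.ofReal_le_ofReal ((pow_le_pow_left₀ h₀ hle 2).trans ?_)
    calc ((u p.1 - l p.1) / c₁ + E * B) ^ 2 ≤ 2 * (((u p.1 - l p.1) / c₁) ^ 2 + (E * B) ^ 2) :=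
          add_sq_le
      _ = 2 / c₁ ^ 2 * (u p.1 - l p.1) ^ 2 + 2 * E ^ 2 * B ^ 2 := by ring
  have hmeas : AEMeasurable (fun y => ENNReal.ofReal (2 / c₁ ^ 2 * (u y - l y) ^ 2)) (Fstar μ ν) :=
    (((hu.1.aemeasurable.sub hl.1.aemeasurable).pow_const 2).const_mul _).ennreal_ofReal.mono_ac
      (Fstar_absolutelyContinuous μ ν)
  calc ∫⁻ p, ENNReal.ofReal ((bracketHigh μ ν l u p - bracketLow μ ν l u p) ^ 2) ∂obsLaw μ ν
      ≤ ∫⁻ p, (ENNReal.ofReal (2 / c₁ ^ 2 * (u p.1 - l p.1) ^ 2) +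
          ENNReal.ofReal (2 * E ^ 2 * B ^ 2)) ∂obsLaw μ ν := lintegral_mono_ae hsq
    _ = ∫⁻ y, ENNReal.ofReal (2 / c₁ ^ 2 * (u y - l y) ^ 2) ∂Fstar μ ν +
          ENNReal.ofReal (2 * E ^ 2) * ENNReal.ofReal (B ^ 2) := by
        rw [lintegral_add_right _ measurable_const, lintegral_const, measure_univ, mul_one,
          Fstar, lintegral_map' hmeas measurable_fst.aemeasurable, ← ENNReal.ofReal_mul (by positivity)]
    _ ≤ (alpha μ ν)⁻¹ * (ENNReal.ofReal (2 / c₁ ^ 2) * I) + ENNReal.ofReal (2 * E ^ 2) * I := by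
        gcongr
        · rw [← lintegral_const_mul' _ _ ENNReal.ofReal_ne_top]
          simp_rw [← ENNReal.ofReal_mul (by positivity : (0 : ℝ) ≤ 2 / c₁ ^ 2)]
          exact lintegral_Fstar_le μ ν _
        · exact ofReal_sq_integral_le_lintegral_sq (hu.sub hl)
    _ = ENNReal.ofReal (2 / c₁ ^ 2 * a + 2 * E ^ 2) * I := by
        have ha : ENNReal.ofReal a = (alpha μ ν)⁻¹ :=
          ENNReal.ofReal_toReal (ENNReal.inv_ne_top.2 hα)
        rw [ENNReal.ofReal_add (by positivity) (by positivity),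
          ENNReal.ofReal_mul (by positivity : (0 : ℝ) ≤ 2 / c₁ ^ 2), ha]
        ring

end Brackets

/-- **Bracket transfer bound** (proof of Lemma 3.6). If `c₀ = inf_{a_G<y<b_F} C(y) > 0`,
then `[g^l, g^u]` brackets `ζ(φ)` whenever `[l, u]` brackets `φ`, and
`E[(g^u − g^l)²] ≤ K ∫ (u − l)² dF` with `K` depending only on `c₀`. -/
theorem bracket_transfer_bound
    (μ ν : Measure ℝ) [IsProbabilityMeasure μ] [IsProbabilityMeasure ν]
    (hα : alpha μ ν ≠ 0)
    (c₀ : ℝ) (hc₀ : 0 < c₀)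
    (hC : ∀ y : ℝ, lowerBound ν < (y : EReal) → (y : EReal) < upperBound μ →
      c₀ ≤ Cfun μ ν y) :
    (∀ l u φ : ℝ → ℝ, Measurable φ → MemLp l 2 μ → MemLp u 2 μ →
        (∀ x, l x ≤ φ x ∧ φ x ≤ u x) →
        ∀ p : ℝ × ℝ,
          bracketLow μ ν l u p ≤ zeta μ ν φ p ∧ zeta μ ν φ p ≤ bracketHigh μ ν l u p) ∧
      ∃ K : ℝ, 0 < K ∧ ∀ l u : ℝ → ℝ, MemLp l 2 μ → MemLp u 2 μ → (∀ x, l x ≤ u x) →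
        ∫⁻ p, ENNReal.ofReal ((bracketHigh μ ν l u p - bracketLow μ ν l u p) ^ 2)
            ∂(obsLaw μ ν) ≤
          ENNReal.ofReal K * ∫⁻ x, ENNReal.ofReal ((u x - l x) ^ 2) ∂μ := by
  obtain ⟨c₁, hc₁, hae⟩ := exists_pos_ae_le_Cfun μ ν hα hc₀ hC
  exact ⟨fun l u φ hφ hl hu hlφu => bracketLow_le_zeta_le_bracketHigh μ ν hα hc₁ hae hφ
      (hl.integrable one_le_two) (hu.integrable one_le_two) hlφu,
    lintegral_sq_bracketHigh_sub_bracketLow_le μ ν hα hc₁ hae⟩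

end RLTM
end
end

section
/- In the random left truncation model, the function C(y) := G*(y) − F*(y⁻) satisfies the identity C(y) = α⁻¹ G(y)(1 − F(y⁻)) for all y ∈ ℝ. -/
open MeasureTheory ProbabilityTheory Filter Set
open scoped ENNReal NNReal Topology BigOperators

noncomputable section

namespace RLTM

variable {Ω : Type*}

/-!
On the truncation region `{T⁰ ≤ Y⁰}`, the event `{T⁰ ≤ y}` contains `{Y⁰ < y}`, and what is left
is the rectangle `{Y⁰ ≥ y} × {T⁰ ≤ y}`, which lies inside the region. Hence
`α (G*(y) − F*(y⁻))` is the product-measure mass of that rectangle, which independence factors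
as `(1 − F(y⁻)) G(y)`.
-/

theorem measureReal_map_obsLaw (μ ν : Measure ℝ) {f : ℝ × ℝ → ℝ} (hf : Measurable f)
    {s : Set ℝ} (hs : MeasurableSet s) :
    ((obsLaw μ ν).map f).real s =
      (alpha μ ν).toReal⁻¹ * (μ.prod ν).real (f ⁻¹' s ∩ {p | p.2 ≤ p.1}) := by
  rw [obsLaw, Measure.map_smul, measureReal_ennreal_smul_apply, ENNReal.toReal_inv,
    map_measureReal_apply hf hs, measureReal_restrict_apply (hf hs)]

theorem preimage_fst_Iio_inter_subset (y : ℝ) :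
    Prod.fst ⁻¹' Iio y ∩ {p : ℝ × ℝ | p.2 ≤ p.1} ⊆ Prod.snd ⁻¹' Iic y ∩ {p | p.2 ≤ p.1} :=
  fun p ⟨hy, hp⟩ => ⟨le_of_lt (lt_of_le_of_lt (b := p.1) hp hy), hp⟩

theorem preimage_snd_Iic_inter_sdiff (y : ℝ) :
    (Prod.snd ⁻¹' Iic y ∩ {p : ℝ × ℝ | p.2 ≤ p.1}) \ (Prod.fst ⁻¹' Iio y ∩ {p | p.2 ≤ p.1}) =
      Ici y ×ˢ Iic y := by
  ext ⟨a, b⟩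
  simp only [Set.mem_sdiff, mem_inter_iff, mem_preimage, mem_Iic, mem_Iio, mem_ofPred_eq,
    mem_prod, mem_Ici]
  constructor
  · rintro ⟨⟨hb, hba⟩, h⟩
    exact ⟨not_lt.1 fun hay => h ⟨hay, hba⟩, hb⟩
  · rintro ⟨hya, hb⟩
    exact ⟨⟨hb, hb.trans hya⟩, fun h => h.1.not_ge hya⟩

theorem Cfun_eq_inv_alpha_mul_measureReal (μ ν : Measure ℝ) [IsFiniteMeasure μ]
    [IsFiniteMeasure ν] (y : ℝ) :
    Cfun μ ν y = (alpha μ ν).toReal⁻¹ * (μ.real (Ici y) * ν.real (Iic y)) := by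
  have hS : MeasurableSet {p : ℝ × ℝ | p.2 ≤ p.1} := measurableSet_le measurable_snd measurable_fst
  rw [Cfun, cdf, cdfLeft, ← measureReal_def, ← measureReal_def, Gstar, Fstar,
    measureReal_map_obsLaw μ ν measurable_snd measurableSet_Iic,
    measureReal_map_obsLaw μ ν measurable_fst measurableSet_Iio, ← mul_sub,
    ← measureReal_sdiff (preimage_fst_Iio_inter_subset y)
      ((measurable_fst measurableSet_Iio).inter hS),
    preimage_snd_Iic_inter_sdiff, measureReal_prod_prod]

theorem Cfun_eq_general
    (μ ν : Measure ℝ) [IsProbabilityMeasure μ] [IsProbabilityMeasure ν] :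
    ∀ y : ℝ, Cfun μ ν y = ((alpha μ ν).toReal)⁻¹ * cdf ν y * (1 - cdfLeft μ y) := by
  intro y
  rw [Cfun_eq_inv_alpha_mul_measureReal, ← compl_Iio, probReal_compl_eq_one_sub measurableSet_Iio]
  simp only [cdf, cdfLeft, measureReal_def]
  ring

/-- **Identity (1.5).** In the random left truncation model,
`C(y) = G*(y) − F*(y⁻) = α⁻¹ G(y) (1 − F(y⁻))` for all `y`. -/
theorem Cfun_eq
    (μ ν : Measure ℝ) [IsProbabilityMeasure μ] [IsProbabilityMeasure ν]
    (hα : alpha μ ν ≠ 0) :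
    ∀ y : ℝ, Cfun μ ν y = ((alpha μ ν).toReal)⁻¹ * cdf ν y * (1 - cdfLeft μ y) :=
  Cfun_eq_general μ ν

end RLTM
end
end
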